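/- Let X be a Tychonoff (completely regular Hausdorff) topological space and let I and J be distinct ideals in A(X), the set of nonzero ideals of C(X) with nonzero annihilator. Then I and J are orthogonal (i.e., I·J = {0} and there is no K ∈ A(X) with K·I = {0} and K·J = {0}) if and only if O(I) ∩ O(J) = ∅ and the closure of O(I) ∪ O(J) equals X. -/
import Mathlib


open Set

/-- `cozUnion S` is `O(S)`: the union of the cozero sets of the members of `S ⊆ C(X, ℝ)`. -/
def cozUnion {X : Type*} [TopologicalSpace X] (S : Set C(X, ℝ)) : Set X :=
  ⋃ f ∈ S, {x : X | f x ≠ 0}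

/-- `annIdeal I` is `Ann(I)`, the annihilator of the ideal `I` of `C(X, ℝ)`. -/
def annIdeal {X : Type*} [TopologicalSpace X] (I : Ideal C(X, ℝ)) : Ideal C(X, ℝ) where
  carrier := {g | ∀ f ∈ I, g * f = 0}
  add_mem' := by
    intro a b ha hb f hf
    rw [add_mul, ha f hf, hb f hf, add_zero]
  zero_mem' := fun f _ => zero_mul f
  smul_mem' := by
    intro c g hg f hf
    rw [smul_eq_mul, mul_assoc, hg f hf, mul_zero]

/-- `annSet X` is `A(X)`: the set of nonzero ideals of `C(X, ℝ)` with nonzero annihilator. -/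
def annSet (X : Type*) [TopologicalSpace X] : Set (Ideal C(X, ℝ)) :=
  {I | I ≠ ⊥ ∧ annIdeal I ≠ ⊥}


lemma mem_cozUnion {X : Type*} [TopologicalSpace X] (S : Set C(X, ℝ)) (x : X) :
    x ∈ cozUnion S ↔ ∃ f ∈ S, f x ≠ 0 := by
  simp [cozUnion]

lemma mul_eq_zero_of_coz {X : Type*} [TopologicalSpace X] {f g : C(X, ℝ)}
    (h : ∀ y, f y ≠ 0 → g y = 0) : g * f = 0 := by
  ext y
  by_cases hy : f y = 0
  · simp [hy]
  · simp [h y hy]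

/-- Distinct `I, J ∈ A(X)` are orthogonal vertices of the annihilating-ideal graph
(adjacent with no common annihilating ideal in `A(X)`) iff `O(I) ∩ O(J) = ∅` and
`O(I) ∪ O(J)` is dense in `X`. -/
theorem orthogonal_iff {X : Type*} [TopologicalSpace X] [T35Space X]
    (I J : Ideal C(X, ℝ)) (hI : I ∈ annSet X) (hJ : J ∈ annSet X) (hIJ : I ≠ J) :
    (I * J = ⊥ ∧ ¬ ∃ K ∈ annSet X, K * I = ⊥ ∧ K * J = ⊥) ↔
      (cozUnion ((I : Ideal C(X, ℝ)) : Set C(X, ℝ)) ∩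
          cozUnion ((J : Ideal C(X, ℝ)) : Set C(X, ℝ)) = ∅ ∧
        closure (cozUnion ((I : Ideal C(X, ℝ)) : Set C(X, ℝ)) ∪
          cozUnion ((J : Ideal C(X, ℝ)) : Set C(X, ℝ))) = univ) := by
  obtain ⟨hI0, -⟩ := hI
  set OI := cozUnion ((I : Ideal C(X, ℝ)) : Set C(X, ℝ)) with hOI
  set OJ := cozUnion ((J : Ideal C(X, ℝ)) : Set C(X, ℝ)) with hOJ
  constructor
  · rintro ⟨h1, h2⟩
    constructor
    · ext x
      simp only [mem_inter_iff, mem_empty_iff_false, iff_false, not_and]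
      rw [hOI, hOJ, mem_cozUnion, mem_cozUnion]
      rintro ⟨f, hf, hfx⟩ ⟨g, hg, hgx⟩
      have hm : f * g ∈ I * J := Ideal.mul_mem_mul hf hg
      rw [h1, Ideal.mem_bot] at hm
      have := ContinuousMap.congr_fun hm x
      simp only [ContinuousMap.mul_apply, ContinuousMap.zero_apply, mul_eq_zero] at this
      rcases this with h | h
      · exact hfx h
      · exact hgx h
    · by_contra hcl
      obtain ⟨x, hx⟩ : ∃ x, x ∉ closure (OI ∪ OJ) := by
        by_contra h
        push_neg at h
        exact hcl (eq_univ_of_forall h)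
      obtain ⟨u, hu, hux, huK⟩ :=
        CompletelyRegularSpace.completely_regular x _ isClosed_closure hx
      set g : C(X, ℝ) := ⟨fun y => 1 - (u y : ℝ), by fun_prop⟩ with hgdef
      have hg0 : ∀ y ∈ closure (OI ∪ OJ), g y = 0 := by
        intro y hy
        have := huK hy
        simp only [hgdef, ContinuousMap.coe_mk, Pi.one_apply] at this ⊢
        rw [this]
        norm_num
      have hgx1 : g x = 1 := by
        simp only [hgdef, ContinuousMap.coe_mk, hux]
        norm_num
      have hgne : g ≠ 0 := by
        intro h
        rw [h] at hgx1
        simp at hgx1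
      have key : ∀ (L : Ideal C(X, ℝ)), cozUnion (L : Set C(X, ℝ)) ⊆ closure (OI ∪ OJ) →
          Ideal.span {g} * L = ⊥ := by
        intro L hL
        rw [eq_bot_iff, Ideal.mul_le]
        intro r hr f hf
        obtain ⟨c, rfl⟩ := Ideal.mem_span_singleton.mp hr
        rw [Ideal.mem_bot]
        have : g * (c * f) = 0 := by
          apply mul_eq_zero_of_coz
          intro y hy
          apply hg0
          apply hL
          rw [mem_cozUnion]
          refine ⟨f, hf, fun h => hy ?_⟩
          simp [h]
        calc g * c * f = g * (c * f) := by ring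
        _ = 0 := this
      have hsubI : OI ⊆ closure (OI ∪ OJ) := subset_union_left.trans subset_closure
      have hsubJ : OJ ⊆ closure (OI ∪ OJ) := subset_union_right.trans subset_closure
      apply h2
      refine ⟨Ideal.span {g}, ⟨?_, ?_⟩, key I hsubI, key J hsubJ⟩
      · intro h
        exact hgne (by simpa [h] using Ideal.mem_span_singleton_self g)
      · obtain ⟨f0, hf0I, hf0ne⟩ := Submodule.exists_mem_ne_zero_of_ne_bot hI0
        rw [Submodule.ne_bot_iff]
        refine ⟨f0, ?_, hf0ne⟩
        intro r hr
        obtain ⟨c, rfl⟩ := Ideal.mem_span_singleton.mp hr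
        have : f0 * g = 0 := by
          rw [mul_comm]
          apply mul_eq_zero_of_coz
          intro y hy
          apply hg0
          apply hsubI
          rw [hOI, mem_cozUnion]
          exact ⟨f0, hf0I, hy⟩
        calc f0 * (g * c) = f0 * g * c := by ring
        _ = 0 := by rw [this, zero_mul]
  · rintro ⟨hdisj, hdense⟩
    constructor
    · rw [eq_bot_iff, Ideal.mul_le]
      intro f hf k hk
      rw [Ideal.mem_bot]
      apply mul_eq_zero_of_coz
      intro y hy
      by_contra hfy
      have : y ∈ OI ∩ OJ := by
        constructor
        · rw [hOI, mem_cozUnion]; exact ⟨f, hf, hfy⟩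
        · rw [hOJ, mem_cozUnion]; exact ⟨k, hk, hy⟩
      rw [hdisj] at this
      exact this
    · rintro ⟨K, ⟨hK0, -⟩, hKI, hKJ⟩
      obtain ⟨f, hfK, hfne⟩ := Submodule.exists_mem_ne_zero_of_ne_bot hK0
      apply hfne
      have hzero : ∀ y ∈ OI ∪ OJ, f y = 0 := by
        rintro y (hy | hy)
        · rw [hOI, mem_cozUnion] at hy
          obtain ⟨h, hhI, hhy⟩ := hy
          have hm : f * h ∈ K * I := Ideal.mul_mem_mul hfK hhI
          rw [hKI, Ideal.mem_bot] at hm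
          have := ContinuousMap.congr_fun hm y
          simp only [ContinuousMap.mul_apply, ContinuousMap.zero_apply, mul_eq_zero] at this
          rcases this with h1 | h1
          · exact h1
          · exact absurd h1 hhy
        · rw [hOJ, mem_cozUnion] at hy
          obtain ⟨h, hhJ, hhy⟩ := hy
          have hm : f * h ∈ K * J := Ideal.mul_mem_mul hfK hhJ
          rw [hKJ, Ideal.mem_bot] at hm
          have := ContinuousMap.congr_fun hm y
          simp only [ContinuousMap.mul_apply, ContinuousMap.zero_apply, mul_eq_zero] at this
          rcases this with h1 | h1
          · exact h1
          · exact absurd h1 hhy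
      have heq : Set.EqOn (f : X → ℝ) 0 (closure (OI ∪ OJ)) :=
        Set.EqOn.closure (fun y hy => hzero y hy) f.continuous continuous_const
      ext y
      have : y ∈ closure (OI ∪ OJ) := by rw [hdense]; trivial
      simpa using heq this
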